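/- Consider the ODE system for (vᵢ, σᵢ) ∈ S²_v × ℝ³, i = 1,…,N: v̇ᵢ = σᵢ × vᵢ, σ̇ᵢ = (J nᵢ vᵢ × w − αᵢ σᵢ × vᵢ)/v² − η σᵢ, with w = (1/N) Σⱼ nⱼ vⱼ, nᵢ > 0, η > 0, J > 0, αᵢ ∈ ℝ. Define U = (J/(4Nv²)) Σ_{i,j} nᵢnⱼ|vᵢ−vⱼ|² and E(t) = (1/2)Σᵢ|σᵢ(t)|² + U(v₁(t),…,v_N(t)). Then along any solution, Ė(t) = −η Σᵢ |σᵢ(t)|², and hence E(t) + η ∫₀ᵗ Σᵢ |σᵢ(s)|² ds = E(0) and |σᵢ(t)| ≤ √(2E(0)) for all t ≥ 0. -/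

import Mathlib

/-!
The kinetic energy changes at rate `∑ᵢ σᵢ ⬝ σ̇ᵢ`: the `αᵢ`-term drops out because `σᵢ ⊥ σᵢ × vᵢ`,
the damping contributes `-η ∑ᵢ |σᵢ|²` and the coupling `(J / v²) ∑ᵢ nᵢ w ⬝ (σᵢ × vᵢ)`.
Since `v̇ᵢ = σᵢ × vᵢ ⊥ vᵢ`, polarizing the weighted dispersion `∑ᵢⱼ nᵢnⱼ |vᵢ - vⱼ|²` shows that `U`
changes at exactly the opposite rate, so `Ė = -η ∑ᵢ |σᵢ|²`. Integrating gives the energy balance;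
as `U ≥ 0` and `E` is nonincreasing, `|σᵢ(t)|² ≤ 2 E(t) ≤ 2 E(0)`.
-/

open Matrix MeasureTheory

def dot3 (u w : Fin 3 → ℝ) : ℝ := ∑ i, u i * w i

noncomputable def norm3 (u : Fin 3 → ℝ) : ℝ := Real.sqrt (dot3 u u)

section DotProduct

variable {ι m R : Type*} [Fintype ι] [Fintype m]

lemma dotProduct_self_nonneg [CommRing R] [LinearOrder R] [IsStrictOrderedRing R] (u : m → R) :
    0 ≤ u ⬝ᵥ u :=
  Finset.sum_nonneg fun i _ => mul_self_nonneg (u i)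

lemma sum_sum_mul_sub_dotProduct_sub_of_dotProduct_eq_zero [CommRing R]
    (n : ι → R) (V X : ι → m → R) (h : ∀ i, V i ⬝ᵥ X i = 0) :
    ∑ i, ∑ j, n i * n j * ((V i - V j) ⬝ᵥ (X i - X j))
      = -2 * ((∑ i, n i • V i) ⬝ᵥ ∑ j, n j • X j) := by
  have hcross : (∑ i, n i • V i) ⬝ᵥ ∑ j, n j • X j = ∑ i, ∑ j, n i * n j * (V i ⬝ᵥ X j) := by
    rw [sum_dotProduct]
    simp only [dotProduct_sum, smul_dotProduct, dotProduct_smul, smul_eq_mul]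
    exact Finset.sum_congr rfl fun i _ => Finset.sum_congr rfl fun j _ => by ring
  have hterm : ∀ i j, n i * n j * ((V i - V j) ⬝ᵥ (X i - X j))
      = -(n i * n j * (V i ⬝ᵥ X j)) - n j * n i * (V j ⬝ᵥ X i) := by
    intro i j
    rw [sub_dotProduct, dotProduct_sub, dotProduct_sub, h, h]
    ring
  simp only [hterm, Finset.sum_sub_distrib, Finset.sum_neg_distrib, hcross]
  rw [Finset.sum_comm (f := fun i j => n j * n i * (V j ⬝ᵥ X i))]
  ring

lemma HasDerivAt.dotProduct_self {f : ℝ → m → ℝ} {f' : m → ℝ} {t : ℝ} (hf : HasDerivAt f f' t) :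
    HasDerivAt (fun s => f s ⬝ᵥ f s) (2 * (f t ⬝ᵥ f')) t := by
  have hk : ∀ k, HasDerivAt (fun s => f s k * f s k) (2 * (f t k * f' k)) t := fun k =>
    ((hasDerivAt_pi.1 hf k).mul (hasDerivAt_pi.1 hf k)).congr_deriv (by ring)
  simpa only [dotProduct, Finset.mul_sum] using HasDerivAt.fun_sum fun k _ => hk k

end DotProduct

lemma add_mul_integral_eq_of_hasDerivAt {E D : ℝ → ℝ} {η : ℝ}
    (hE : ∀ t, HasDerivAt E (-η * D t) t) (hD : Continuous D) (t : ℝ) :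
    E t + η * ∫ s in (0 : ℝ)..t, D s = E 0 := by
  have h := intervalIntegral.integral_eq_sub_of_hasDerivAt (fun s _ => hE s)
    ((continuous_const.mul hD).intervalIntegrable 0 t)
  rw [intervalIntegral.integral_const_mul] at h
  linarith

lemma self_dotProduct_spin_force (σ v w : Fin 3 → ℝ) (c a b η : ℝ) :
    σ ⬝ᵥ (c • (a • (v ⨯₃ w) - b • (σ ⨯₃ v)) - η • σ) = c * a * (w ⬝ᵥ σ ⨯₃ v) - η * (σ ⬝ᵥ σ) := by
  simp only [dotProduct_sub, dotProduct_smul, dot_self_cross, smul_eq_mul]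
  rw [triple_product_permutation σ v w, triple_product_permutation v w σ]
  ring

theorem hasDerivAt_spin_energy {N : ℕ} (hN : N ≠ 0) {v0 J η : ℝ} {n α : Fin N → ℝ}
    {v σ : Fin N → ℝ → Fin 3 → ℝ} {w : Fin 3 → ℝ} {t : ℝ}
    (hw : w = (N : ℝ)⁻¹ • ∑ i, n i • v i t)
    (hv : ∀ i, HasDerivAt (v i) (σ i t ⨯₃ v i t) t)
    (hσ : ∀ i, HasDerivAt (σ i)
      ((v0 ^ 2)⁻¹ • ((J * n i) • (v i t ⨯₃ w) - α i • (σ i t ⨯₃ v i t)) - η • σ i t) t) :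
    HasDerivAt (fun s => (1 / 2) * ∑ i, σ i s ⬝ᵥ σ i s +
        J / (4 * N * v0 ^ 2) * ∑ i, ∑ j, n i * n j * ((v i s - v j s) ⬝ᵥ (v i s - v j s)))
      (-η * ∑ i, σ i t ⬝ᵥ σ i t) t := by
  have hkin := (HasDerivAt.fun_sum (u := Finset.univ) fun i _ =>
    (hσ i).dotProduct_self).const_mul (1 / 2 : ℝ)
  have hpot := (HasDerivAt.fun_sum (u := Finset.univ) fun i _ =>
    HasDerivAt.fun_sum (u := Finset.univ) fun j _ =>
      (((hv i).sub (hv j)).dotProduct_self).const_mul (n i * n j)).const_mul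
    (J / (4 * N * v0 ^ 2))
  refine (hkin.add hpot).congr_deriv ?_
  have hkin_rate : ∑ i, 2 * (σ i t ⬝ᵥ
        ((v0 ^ 2)⁻¹ • ((J * n i) • (v i t ⨯₃ w) - α i • (σ i t ⨯₃ v i t)) - η • σ i t))
      = 2 * ((v0 ^ 2)⁻¹ * J * ∑ i, n i * (w ⬝ᵥ σ i t ⨯₃ v i t))
        - 2 * η * ∑ i, σ i t ⬝ᵥ σ i t := by
    simp only [self_dotProduct_spin_force, Finset.mul_sum, ← Finset.sum_sub_distrib]
    exact Finset.sum_congr rfl fun i _ => by ring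
  have hpot_rate : ∑ i, ∑ j, n i * n j *
        (2 * ((v i - v j) t ⬝ᵥ (σ i t ⨯₃ v i t - σ j t ⨯₃ v j t)))
      = -4 * N * ∑ i, n i * (w ⬝ᵥ σ i t ⨯₃ v i t) := by
    have hmass : ∑ i, n i • v i t = (N : ℝ) • w := by
      rw [hw, smul_inv_smul₀ (Nat.cast_ne_zero.2 hN)]
    simp only [mul_left_comm _ (2 : ℝ), ← Finset.mul_sum, Pi.sub_apply]
    rw [sum_sum_mul_sub_dotProduct_sub_of_dotProduct_eq_zero n (fun i => v i t)
      (fun i => σ i t ⨯₃ v i t) (fun i => dot_cross_self _ _), hmass, smul_dotProduct,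
      dotProduct_sum]
    simp only [dotProduct_smul, smul_eq_mul]
    ring
  rw [hkin_rate, hpot_rate]
  field_simp
  ring

theorem energy_dissipation_general
    (N : ℕ) (hN : 0 < N) (v0 J η : ℝ) (hJ : 0 < J) (hη : 0 < η)
    (n : Fin N → ℝ) (hn : ∀ i, 0 < n i) (α : Fin N → ℝ)
    (v σ : Fin N → ℝ → Fin 3 → ℝ)
    (w : ℝ → Fin 3 → ℝ) (hw : ∀ t, w t = (N : ℝ)⁻¹ • ∑ i, n i • v i t)
    (hode_v : ∀ i t, HasDerivAt (v i) (σ i t ⨯₃ v i t) t)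
    (hode_σ : ∀ i t, HasDerivAt (σ i)
      ((v0 ^ 2)⁻¹ • ((J * n i) • (v i t ⨯₃ w t) - α i • (σ i t ⨯₃ v i t))
        - η • σ i t) t) :
    let U : ℝ → ℝ := fun t =>
      J / (4 * N * v0 ^ 2) *
        ∑ i, ∑ j, n i * n j * dot3 (v i t - v j t) (v i t - v j t)
    let E : ℝ → ℝ := fun t => (1 / 2) * ∑ i, dot3 (σ i t) (σ i t) + U t
    (∀ t, HasDerivAt E (-η * ∑ i, dot3 (σ i t) (σ i t)) t) ∧
    (∀ t, 0 ≤ t →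
      E t + η * ∫ s in (0:ℝ)..t, ∑ i, dot3 (σ i s) (σ i s) = E 0) ∧
    (∀ i t, 0 ≤ t → norm3 (σ i t) ≤ Real.sqrt (2 * E 0)) := by
  intro U E
  have hE : ∀ t, HasDerivAt E (-η * ∑ i, dot3 (σ i t) (σ i t)) t := fun t =>
    hasDerivAt_spin_energy hN.ne' (hw t) (fun i => hode_v i t) (fun i => hode_σ i t)
  have hσ_cont : ∀ i, Continuous (σ i) := fun i =>
    continuous_iff_continuousAt.2 fun s => (hode_σ i s).continuousAt
  have hbalance := add_mul_integral_eq_of_hasDerivAt hE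
    (continuous_finsetSum _ fun i _ => (hσ_cont i).dotProduct (hσ_cont i))
  refine ⟨hE, fun t _ => hbalance t, fun i t ht => Real.sqrt_le_sqrt ?_⟩
  have hdissipated : 0 ≤ η * ∫ s in (0 : ℝ)..t, ∑ i, dot3 (σ i s) (σ i s) :=
    mul_nonneg hη.le <| intervalIntegral.integral_nonneg ht fun s _ =>
      Finset.sum_nonneg fun j _ => dotProduct_self_nonneg (σ j s)
  have hU : 0 ≤ U t :=
    mul_nonneg (div_nonneg hJ.le (by positivity)) <| Finset.sum_nonneg fun a _ =>
      Finset.sum_nonneg fun b _ =>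
        mul_nonneg (mul_nonneg (hn a).le (hn b).le) (dotProduct_self_nonneg _)
  have hσi : dot3 (σ i t) (σ i t) ≤ ∑ j, dot3 (σ j t) (σ j t) :=
    Finset.single_le_sum (f := fun j => dot3 (σ j t) (σ j t))
      (fun j _ => dotProduct_self_nonneg (σ j t)) (Finset.mem_univ i)
  have hEt : E t = (1 / 2) * ∑ j, dot3 (σ j t) (σ j t) + U t := rfl
  linarith [hbalance t]

/-- Energy dissipation for the dissipative inertial spin system:
along solutions of `v̇ᵢ = σᵢ × vᵢ`, `σ̇ᵢ = (J nᵢ vᵢ × w − αᵢ σᵢ × vᵢ)/v² − η σᵢ`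
with `w = (1/N) Σⱼ nⱼ vⱼ`, `|vᵢ| = v`, `vᵢ·σᵢ = 0`, the energy
`E = (1/2)Σᵢ|σᵢ|² + U` satisfies `Ė = −η Σᵢ|σᵢ|²`, hence
`E(t) + η ∫₀ᵗ Σᵢ|σᵢ|² = E(0)` and `|σᵢ(t)| ≤ √(2E(0))` for `t ≥ 0`. -/
theorem energy_dissipation
    (N : ℕ) (hN : 0 < N) (v0 J η : ℝ) (hv0 : 0 < v0) (hJ : 0 < J) (hη : 0 < η)
    (n : Fin N → ℝ) (hn : ∀ i, 0 < n i) (α : Fin N → ℝ)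
    (v σ : Fin N → ℝ → Fin 3 → ℝ)
    (w : ℝ → Fin 3 → ℝ) (hw : ∀ t, w t = (N : ℝ)⁻¹ • ∑ i, n i • v i t)
    (hode_v : ∀ i t, HasDerivAt (v i) (σ i t ⨯₃ v i t) t)
    (hode_σ : ∀ i t, HasDerivAt (σ i)
      ((v0 ^ 2)⁻¹ • ((J * n i) • (v i t ⨯₃ w t) - α i • (σ i t ⨯₃ v i t))
        - η • σ i t) t)
    (hsphere : ∀ i t, dot3 (v i t) (v i t) = v0 ^ 2)
    (horth : ∀ i t, dot3 (v i t) (σ i t) = 0) :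
    let U : ℝ → ℝ := fun t =>
      J / (4 * N * v0 ^ 2) *
        ∑ i, ∑ j, n i * n j * dot3 (v i t - v j t) (v i t - v j t)
    let E : ℝ → ℝ := fun t => (1 / 2) * ∑ i, dot3 (σ i t) (σ i t) + U t
    (∀ t, HasDerivAt E (-η * ∑ i, dot3 (σ i t) (σ i t)) t) ∧
    (∀ t, 0 ≤ t →
      E t + η * ∫ s in (0:ℝ)..t, ∑ i, dot3 (σ i s) (σ i s) = E 0) ∧
    (∀ i t, 0 ≤ t → norm3 (σ i t) ≤ Real.sqrt (2 * E 0)) :=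
  energy_dissipation_general N hN v0 J η hJ hη n hn α v σ w hw hode_v hode_σ
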